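/- Let d ≥ 1, η ∈ (0,1], σ ≥ 0, L ≥ 0. Let (Ω, μ) be a probability space, let ℒ : ℝ^d → ℝ be differentiable with L-Lipschitz gradient, fix x₀, x, v₀ ∈ ℝ^d, and let s : Ω → ℝ^d be square-integrable with ∫_Ω s dμ = ∇ℒ(x) and ∫_Ω ‖s(ω) − ∇ℒ(x)‖² dμ(ω) ≤ σ². Define v(ω) = (1−η)v₀ + η·s(ω). Then ∫_Ω ‖v(ω) − ∇ℒ(x)‖² dμ(ω) ≤ (1−η)·‖v₀ − ∇ℒ(x₀)‖² + (L²/η)·‖x − x₀‖² + η²σ². -/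

import Mathlib

open MeasureTheory

/-!
Split `v - ∇ℒ(x)` into the deterministic part `(1 - η)(v₀ - ∇ℒ(x))` and the mean-zero noise
`η (s - ∇ℒ(x))`. Because the noise is centred, the cross term integrates to zero, so the mean square
is the squared bias plus `η²` times the variance. The bias is bounded via
`v₀ - ∇ℒ(x) = (v₀ - ∇ℒ(x₀)) + (∇ℒ(x₀) - ∇ℒ(x))` and Young's inequality with weights `1 - η` and `η`,
and the gradient difference by `L ‖x - x₀‖`.
-/

section BiasVariance

variable {E : Type*} [NormedAddCommGroup E] [InnerProductSpace ℝ E] [CompleteSpace E]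
  {Ω : Type*} [MeasurableSpace Ω] {μ : Measure Ω} [IsProbabilityMeasure μ]

theorem integral_norm_add_sq_of_integral_eq_zero (c : E) {e : Ω → E} (he : MemLp e 2 μ)
    (he_mean : ∫ ω, e ω ∂μ = 0) :
    ∫ ω, ‖c + e ω‖ ^ 2 ∂μ = ‖c‖ ^ 2 + ∫ ω, ‖e ω‖ ^ 2 ∂μ := by
  have he_int : Integrable e μ := he.integrable one_le_two
  have h_inner : Integrable (fun ω => 2 * inner ℝ c (e ω)) μ := (he_int.const_inner c).const_mul 2
  simp_rw [norm_add_sq_real]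
  rw [integral_add (by exact (integrable_const _).add h_inner) he.norm.integrable_sq,
    integral_add (integrable_const _) h_inner, integral_const_mul, integral_inner he_int,
    he_mean]
  simp

end BiasVariance

theorem one_sub_sq_mul_add_sq_le {η p q : ℝ} (hη₀ : 0 < η) (hη₁ : η ≤ 1) :
    (1 - η) ^ 2 * (p + q) ^ 2 ≤ (1 - η) * p ^ 2 + q ^ 2 / η := by
  rw [← sub_nonneg]
  -- Young's inequality with parameter `η / (1 - η)`, written as a sum of squares.
  have h_sos : (1 - η) * p ^ 2 + q ^ 2 / η - (1 - η) ^ 2 * (p + q) ^ 2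
      = ((1 - η) * (η * p - (1 - η) * q) ^ 2 + η * (2 - η) * q ^ 2) / η := by
    field_simp
    ring
  have : 0 ≤ 1 - η := by linarith
  have : 0 ≤ 2 - η := by linarith
  rw [h_sos]
  positivity

theorem norm_one_sub_smul_add_sq_le {F : Type*} [SeminormedAddCommGroup F] [NormedSpace ℝ F]
    {η : ℝ} (hη₀ : 0 < η) (hη₁ : η ≤ 1) (a b : F) :
    ‖(1 - η) • (a + b)‖ ^ 2 ≤ (1 - η) * ‖a‖ ^ 2 + ‖b‖ ^ 2 / η := by
  rw [norm_smul, mul_pow, Real.norm_eq_abs, sq_abs]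
  calc (1 - η) ^ 2 * ‖a + b‖ ^ 2 ≤ (1 - η) ^ 2 * (‖a‖ + ‖b‖) ^ 2 := by
        gcongr
        exact norm_add_le a b
    _ ≤ (1 - η) * ‖a‖ ^ 2 + ‖b‖ ^ 2 / η := one_sub_sq_mul_add_sq_le hη₀ hη₁

theorem stmt_9_general (d : ℕ) (η σ L : ℝ)
    (hη : η ∈ Set.Ioc (0 : ℝ) 1)
    {Ω : Type*} [MeasurableSpace Ω] (μ : Measure Ω) [IsProbabilityMeasure μ]
    (ℒ : EuclideanSpace ℝ (Fin d) → ℝ)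
    (hLip : ∀ x y, ‖gradient ℒ x - gradient ℒ y‖ ≤ L * ‖x - y‖)
    (x₀ x v₀ : EuclideanSpace ℝ (Fin d))
    (s : Ω → EuclideanSpace ℝ (Fin d))
    (hs2 : MemLp s 2 μ)
    (hsmean : ∫ ω, s ω ∂μ = gradient ℒ x)
    (hsvar : ∫ ω, ‖s ω - gradient ℒ x‖ ^ 2 ∂μ ≤ σ ^ 2) :
    ∫ ω, ‖((1 - η) • v₀ + η • s ω) - gradient ℒ x‖ ^ 2 ∂μ ≤
      (1 - η) * ‖v₀ - gradient ℒ x₀‖ ^ 2 + (L ^ 2 / η) * ‖x - x₀‖ ^ 2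
        + η ^ 2 * σ ^ 2 := by
  obtain ⟨hη₀, hη₁⟩ := hη
  set g := gradient ℒ x
  have h_split : ∀ ω, (1 - η) • v₀ + η • s ω - g
      = (1 - η) • ((v₀ - gradient ℒ x₀) + (gradient ℒ x₀ - g)) + η • (s ω - g) := by
    intro ω
    module
  have h_noise : MemLp (fun ω => η • (s ω - g)) 2 μ := (hs2.sub (memLp_const g)).const_smul η
  have h_noise_mean : ∫ ω, η • (s ω - g) ∂μ = 0 := by
    rw [integral_smul, integral_sub (hs2.integrable one_le_two) (integrable_const g), hsmean]
    simp
  have h_variance : ∫ ω, ‖η • (s ω - g)‖ ^ 2 ∂μ ≤ η ^ 2 * σ ^ 2 := by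
    simp_rw [norm_smul, mul_pow, Real.norm_eq_abs, sq_abs]
    rw [integral_const_mul]
    gcongr
  have h_grad : ‖gradient ℒ x₀ - g‖ ^ 2 ≤ L ^ 2 * ‖x - x₀‖ ^ 2 := by
    rw [← mul_pow, norm_sub_rev x]
    gcongr
    exact hLip x₀ x
  simp_rw [h_split]
  rw [integral_norm_add_sq_of_integral_eq_zero _ h_noise h_noise_mean]
  have h_bias := norm_one_sub_smul_add_sq_le hη₀ hη₁ (v₀ - gradient ℒ x₀) (gradient ℒ x₀ - g)
  have h_drift : ‖gradient ℒ x₀ - g‖ ^ 2 / η ≤ L ^ 2 / η * ‖x - x₀‖ ^ 2 := by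
    rw [div_mul_eq_mul_div]
    gcongr
  linarith

/-- One-step momentum-deviation recursion (proof of Lemma 4). -/
theorem stmt_9 (d : ℕ) (hd : 1 ≤ d) (η σ L : ℝ)
    (hη : η ∈ Set.Ioc (0 : ℝ) 1) (hσ : 0 ≤ σ) (hL : 0 ≤ L)
    {Ω : Type*} [MeasurableSpace Ω] (μ : Measure Ω) [IsProbabilityMeasure μ]
    (ℒ : EuclideanSpace ℝ (Fin d) → ℝ)
    (hdiff : Differentiable ℝ ℒ)
    (hLip : ∀ x y, ‖gradient ℒ x - gradient ℒ y‖ ≤ L * ‖x - y‖)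
    (x₀ x v₀ : EuclideanSpace ℝ (Fin d))
    (s : Ω → EuclideanSpace ℝ (Fin d))
    (hs2 : MemLp s 2 μ)
    (hsmean : ∫ ω, s ω ∂μ = gradient ℒ x)
    (hsvar : ∫ ω, ‖s ω - gradient ℒ x‖ ^ 2 ∂μ ≤ σ ^ 2) :
    ∫ ω, ‖((1 - η) • v₀ + η • s ω) - gradient ℒ x‖ ^ 2 ∂μ ≤
      (1 - η) * ‖v₀ - gradient ℒ x₀‖ ^ 2 + (L ^ 2 / η) * ‖x - x₀‖ ^ 2
        + η ^ 2 * σ ^ 2 :=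
  stmt_9_general d η σ L hη μ ℒ hLip x₀ x v₀ s hs2 hsmean hsvar
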